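/- For any real number λ, the vector field X = (0, (1/2)(Σᵢ κᵢ) u + λ v, (λ/2) x₁, …, (λ/2) x_n) on the Cahen-Wallach space (ℝ^{n+2}, g_cw) satisfies L_X g_cw + Ric = λ g_cw. Hence every Cahen-Wallach symmetric space is an expanding, steady, and shrinking Ricci soliton. -/

import Mathlib

noncomputable section

/-- A point of `ℝ^{n+2}`, written `(u, v, x)`. -/
abbrev Pt (n : ℕ) : Type := ℝ × ℝ × (Fin n → ℝ)

/-- The `k`-th coordinate direction in `ℝ^{n+2}` (`k = 0` is `∂_u`, `k = 1` is `∂_v`,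
`k = i + 2` is `∂_{x_i}`). -/
def cdir (n : ℕ) (k : Fin (n + 2)) : Pt n :=
  if (k : ℕ) = 0 then (1, 0, 0)
  else if (k : ℕ) = 1 then (0, 1, 0)
  else (0, 0, fun i => if (i : ℕ) + 2 = (k : ℕ) then 1 else 0)

/-- Partial derivative along the `k`-th coordinate direction. -/
def pd {n : ℕ} (k : Fin (n + 2)) (F : Pt n → ℝ) (p : Pt n) : ℝ :=
  fderiv ℝ F p (cdir n k)

/-- The `x`-coordinate of `p` associated to an index `k` with `2 ≤ k`. -/
def xc {n : ℕ} (p : Pt n) (k : Fin (n + 2)) : ℝ :=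
  if h : 2 ≤ (k : ℕ) then p.2.2 ⟨(k : ℕ) - 2, by have := k.isLt; omega⟩ else 0

/-- The value `κ_i` associated to an index `k = i + 2` with `2 ≤ k`. -/
def κc {n : ℕ} (κ : Fin n → ℝ) (k : Fin (n + 2)) : ℝ :=
  if h : 2 ≤ (k : ℕ) then κ ⟨(k : ℕ) - 2, by have := k.isLt; omega⟩ else 0

/-- The index of `ℝ^{n+2}` corresponding to the coordinate `x_i`. -/
def xi (n : ℕ) (i : Fin n) : Fin (n + 2) := ⟨(i : ℕ) + 2, by have := i.isLt; omega⟩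

/-- The Cahen-Wallach metric `g_cw = (Σᵢ κᵢ xᵢ²)(du)² + du dv + Σᵢ (dxᵢ)²` on `ℝ^{n+2}`. -/
def gCW {n : ℕ} (κ : Fin n → ℝ) (p : Pt n) (k l : Fin (n + 2)) : ℝ :=
  if (k : ℕ) = 0 ∧ (l : ℕ) = 0 then ∑ a, κ a * (p.2.2 a) ^ 2
  else if ((k : ℕ) = 0 ∧ (l : ℕ) = 1) ∨ ((k : ℕ) = 1 ∧ (l : ℕ) = 0) then 1
  else if k = l ∧ 2 ≤ (k : ℕ) then 1 else 0

/-- The inverse of the Cahen-Wallach metric. -/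
def gCWinv {n : ℕ} (κ : Fin n → ℝ) (p : Pt n) (k l : Fin (n + 2)) : ℝ :=
  if (k : ℕ) = 1 ∧ (l : ℕ) = 1 then -(∑ a, κ a * (p.2.2 a) ^ 2)
  else if ((k : ℕ) = 0 ∧ (l : ℕ) = 1) ∨ ((k : ℕ) = 1 ∧ (l : ℕ) = 0) then 1
  else if k = l ∧ 2 ≤ (k : ℕ) then 1 else 0

/-- Christoffel symbols `Γ^k_{ij}` of the Levi-Civita connection of `g_cw`. -/
def ΓCW {n : ℕ} (κ : Fin n → ℝ) (p : Pt n) (k i j : Fin (n + 2)) : ℝ :=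
  (1 / 2) * ∑ l, gCWinv κ p k l *
    (pd i (fun q => gCW κ q l j) p + pd j (fun q => gCW κ q l i) p
      - pd l (fun q => gCW κ q i j) p)

/-- Component `l` of `R(∂_i, ∂_j) ∂_k`, where `R(X,Y) = ∇_{[X,Y]} - [∇_X, ∇_Y]`. -/
def RCW {n : ℕ} (κ : Fin n → ℝ) (p : Pt n) (l i j k : Fin (n + 2)) : ℝ :=
  -(pd i (fun q => ΓCW κ q l j k) p - pd j (fun q => ΓCW κ q l i k) p
    + ∑ m, (ΓCW κ p l i m * ΓCW κ p m j k - ΓCW κ p l j m * ΓCW κ p m i k))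

/-- The `(0,4)`-curvature tensor `R(∂_i, ∂_j, ∂_k, ∂_l) = g(R(∂_i, ∂_j) ∂_k, ∂_l)`. -/
def R4CW {n : ℕ} (κ : Fin n → ℝ) (p : Pt n) (i j k l : Fin (n + 2)) : ℝ :=
  ∑ m, RCW κ p m i j k * gCW κ p m l

/-- Ricci tensor of `g_cw`: `Ric(X,Y) = trace (Z ↦ R(X,Z)Y)`. -/
def RicCW {n : ℕ} (κ : Fin n → ℝ) (p : Pt n) (i j : Fin (n + 2)) : ℝ :=
  ∑ k, RCW κ p k i k j

/-- Lie derivative of `g_cw` along a vector field with components `X`. -/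
def lieCW {n : ℕ} (κ : Fin n → ℝ) (X : Pt n → Fin (n + 2) → ℝ) (p : Pt n)
    (i j : Fin (n + 2)) : ℝ :=
  ∑ k, (X p k * pd k (fun q => gCW κ q i j) p
    + gCW κ p k j * pd i (fun q => X q k) p
    + gCW κ p i k * pd j (fun q => X q k) p)

/-- Hessian `Hess_h(∂_i, ∂_j)` with respect to the Levi-Civita connection of `g_cw`. -/
def hessCW {n : ℕ} (κ : Fin n → ℝ) (h : Pt n → ℝ) (p : Pt n) (i j : Fin (n + 2)) : ℝ :=
  pd i (fun q => pd j h q) p - ∑ k, ΓCW κ p k i j * pd k h p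

/-- Components of the gradient of `h` with respect to `g_cw`. -/
def gradCW {n : ℕ} (κ : Fin n → ℝ) (h : Pt n → ℝ) (p : Pt n) (k : Fin (n + 2)) : ℝ :=
  ∑ l, gCWinv κ p k l * pd l h p

/-- Component `k` of the covariant derivative `∇_{∂_i} X` for `g_cw`. -/
def covCW {n : ℕ} (κ : Fin n → ℝ) (X : Pt n → Fin (n + 2) → ℝ) (p : Pt n)
    (i k : Fin (n + 2)) : ℝ :=
  pd i (fun q => X q k) p + ∑ j, ΓCW κ p k i j * X p j

/-- The Ricci operator of `g_cw`, `g(QX, Y) = Ric(X, Y)`. -/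
def QCW {n : ℕ} (κ : Fin n → ℝ) (p : Pt n) (k i : Fin (n + 2)) : ℝ :=
  ∑ j, gCWinv κ p k j * RicCW κ p j i

/-!
`g_cw` is a plane wave: its only non-constant component is `g_uu = H = Σ κₐ xₐ²`. Its Christoffel
symbols (`Γ^v_{u xₐ} = κₐ xₐ`, `Γ^{xₐ}_{uu} = -κₐ xₐ`) are therefore linear in the point,
`Γ^k_{k m}` and every product `Γ^k_{i m} Γ^m_{k j}` vanish, and `Ric_{ij} = Σ_k ∂_k Γ^k_{ij}` is
`-Σ κₐ` at `(u, u)` and `0` elsewhere. The field `X` is linear as well; since `H` is quadratic in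
`x` and `X` scales `x` by `λ / 2`, `X(H) = λ H`, and one finds `L_X g = λ g + (Σ κₐ) du²`, the last
term coming from the `u`-dependence of `X^v`.
-/

section CahenWallach

variable {n : ℕ}

@[simp] lemma xi_val (a : Fin n) : (xi n a : ℕ) = a + 2 := rfl

@[simp] lemma xi_inj {a b : Fin n} : xi n a = xi n b ↔ a = b := by simp [Fin.ext_iff]

@[simp] lemma xi_ne_zero (a : Fin n) : xi n a ≠ 0 := by simp [Fin.ext_iff]

@[simp] lemma xi_ne_one (a : Fin n) : xi n a ≠ 1 := by simp [Fin.ext_iff]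

lemma eq_zero_or_eq_one_or_eq_xi (k : Fin (n + 2)) : k = 0 ∨ k = 1 ∨ ∃ a, k = xi n a := by
  induction k using Fin.cases with
  | zero => exact .inl rfl
  | succ k =>
    induction k using Fin.cases with
    | zero => exact .inr (.inl rfl)
    | succ a => exact .inr (.inr ⟨a, rfl⟩)

lemma sum_fin_add_two {M : Type*} [AddCommMonoid M] (f : Fin (n + 2) → M) :
    ∑ k, f k = f 0 + f 1 + ∑ a, f (xi n a) := by
  rw [Fin.sum_univ_succ, Fin.sum_univ_succ, ← add_assoc]
  rfl

@[simp] lemma cdir_zero : cdir n 0 = (1, 0, 0) := by simp [cdir]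

@[simp] lemma cdir_one : cdir n 1 = (0, 1, 0) := by simp [cdir]

@[simp] lemma cdir_xi (a : Fin n) : cdir n (xi n a) = (0, 0, Pi.single a 1) := by
  ext i <;> simp [cdir, Pi.single_apply, Fin.ext_iff]

@[simp] lemma xc_xi (p : Pt n) (a : Fin n) : xc p (xi n a) = p.2.2 a := by simp [xc]

@[simp] lemma κc_zero (κ : Fin n → ℝ) : κc κ 0 = 0 := by simp [κc]

@[simp] lemma κc_one (κ : Fin n → ℝ) : κc κ 1 = 0 := by simp [κc]

@[simp] lemma κc_xi (κ : Fin n → ℝ) (a : Fin n) : κc κ (xi n a) = κ a := by simp [κc]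

@[simp] lemma xc_add (q r : Pt n) (c : Fin (n + 2)) : xc (q + r) c = xc q c + xc r c := by
  unfold xc; split_ifs <;> simp

@[simp] lemma xc_smul (t : ℝ) (q : Pt n) (c : Fin (n + 2)) : xc (t • q) c = t * xc q c := by
  unfold xc; split_ifs <;> simp

lemma pd_of_isLinearMap {F : Pt n → ℝ} (hF : IsLinearMap ℝ F) (k : Fin (n + 2)) (p : Pt n) :
    pd k F p = F (cdir n k) := by
  rw [pd, show F = LinearMap.toContinuousLinearMap (IsLinearMap.mk' F hF) from rfl,
    ContinuousLinearMap.fderiv]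

@[simp] lemma pd_const (k : Fin (n + 2)) (c : ℝ) (p : Pt n) : pd k (fun _ => c) p = 0 := by
  simp [pd]

lemma pd_sum_mul_sq (κ : Fin n → ℝ) (k : Fin (n + 2)) (p : Pt n) :
    pd k (fun q : Pt n => ∑ a, κ a * q.2.2 a ^ 2) p = 2 * κc κ k * xc p k := by
  have hsum := HasFDerivAt.fun_sum fun a (_ : a ∈ Finset.univ) =>
    (((hasFDerivAt_apply a p.2.2).comp p (hasFDerivAt_snd (𝕜 := ℝ) (p := p)).snd).pow 2).const_mul
      (κ a)
  rw [pd, hsum.fderiv (f := fun q : Pt n => ∑ a, κ a * q.2.2 a ^ 2)]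
  rcases eq_zero_or_eq_one_or_eq_xi k with rfl | rfl | ⟨b, rfl⟩ <;> simp [Pi.single_apply]
  ring

lemma pd_gCW (κ : Fin n → ℝ) (m i j : Fin (n + 2)) (p : Pt n) :
    pd m (fun q => gCW κ q i j) p = if i = 0 ∧ j = 0 then 2 * κc κ m * xc p m else 0 := by
  by_cases h : i = 0 ∧ j = 0
  · obtain ⟨rfl, rfl⟩ := h
    simpa [gCW] using pd_sum_mul_sq κ m p
  · have hconst : (fun q => gCW κ q i j) = fun _ => gCW κ 0 i j := by
      funext q
      simp [gCW, h]
    rw [hconst, pd_const, if_neg h]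

lemma ΓCW_eq (κ : Fin n → ℝ) (p : Pt n) (k i j : Fin (n + 2)) :
    ΓCW κ p k i j = (if k = 1 ∧ j = 0 then κc κ i * xc p i else 0)
      + (if k = 1 ∧ i = 0 then κc κ j * xc p j else 0)
      - (if i = 0 ∧ j = 0 then κc κ k * xc p k else 0) := by
  rw [ΓCW, sum_fin_add_two]
  simp only [pd_gCW]
  rcases eq_zero_or_eq_one_or_eq_xi k with rfl | rfl | ⟨b, rfl⟩ <;>
    simp [gCWinv] <;> split_ifs <;> ring

lemma isLinearMap_ΓCW (κ : Fin n → ℝ) (k i j : Fin (n + 2)) :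
    IsLinearMap ℝ (fun q : Pt n => ΓCW κ q k i j) := by
  simp only [ΓCW_eq]
  constructor <;> intros <;> split_ifs <;> simp <;> ring

lemma pd_ΓCW (κ : Fin n → ℝ) (m k i j : Fin (n + 2)) (p : Pt n) :
    pd m (fun q => ΓCW κ q k i j) p = ΓCW κ (cdir n m) k i j :=
  pd_of_isLinearMap (isLinearMap_ΓCW κ k i j) m p

lemma ΓCW_self_left_eq_zero (κ : Fin n → ℝ) (p : Pt n) (k m : Fin (n + 2)) :
    ΓCW κ p k k m = 0 := by
  rw [ΓCW_eq]
  rcases eq_zero_or_eq_one_or_eq_xi k with rfl | rfl | ⟨b, rfl⟩ <;> simp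

lemma ΓCW_mul_ΓCW_eq_zero (κ : Fin n → ℝ) (p : Pt n) (k i m j : Fin (n + 2)) :
    ΓCW κ p k i m * ΓCW κ p m k j = 0 := by
  rw [ΓCW_eq, ΓCW_eq]
  rcases eq_zero_or_eq_one_or_eq_xi k with rfl | rfl | ⟨b, rfl⟩ <;>
    rcases eq_zero_or_eq_one_or_eq_xi m with rfl | rfl | ⟨c, rfl⟩ <;> simp

lemma RCW_self_eq_pd_ΓCW (κ : Fin n → ℝ) (p : Pt n) (i j k : Fin (n + 2)) :
    RCW κ p k i k j = pd k (fun q => ΓCW κ q k i j) p := by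
  simp [RCW, pd_ΓCW, ΓCW_self_left_eq_zero, ΓCW_mul_ΓCW_eq_zero]

lemma RicCW_eq (κ : Fin n → ℝ) (p : Pt n) (i j : Fin (n + 2)) :
    RicCW κ p i j = if i = 0 ∧ j = 0 then -∑ a, κ a else 0 := by
  simp only [RicCW, RCW_self_eq_pd_ΓCW, pd_ΓCW]
  simp [sum_fin_add_two, ΓCW_eq, xc]
  split_ifs <;> simp

def solitonField (κ : Fin n → ℝ) (lam : ℝ) (q : Pt n) (k : Fin (n + 2)) : ℝ :=
  if (k : ℕ) = 0 then 0
  else if (k : ℕ) = 1 then (1 / 2) * (∑ a, κ a) * q.1 + lam * q.2.1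
  else lam / 2 * xc q k

@[simp] lemma solitonField_zero (κ : Fin n → ℝ) (lam : ℝ) (q : Pt n) :
    solitonField κ lam q 0 = 0 := by
  simp [solitonField]

@[simp] lemma solitonField_one (κ : Fin n → ℝ) (lam : ℝ) (q : Pt n) :
    solitonField κ lam q 1 = (1 / 2) * (∑ a, κ a) * q.1 + lam * q.2.1 := by
  simp [solitonField]

@[simp] lemma solitonField_xi (κ : Fin n → ℝ) (lam : ℝ) (q : Pt n) (a : Fin n) :
    solitonField κ lam q (xi n a) = lam / 2 * q.2.2 a := by
  simp [solitonField]

lemma isLinearMap_solitonField (κ : Fin n → ℝ) (lam : ℝ) (k : Fin (n + 2)) :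
    IsLinearMap ℝ (fun q : Pt n => solitonField κ lam q k) := by
  rcases eq_zero_or_eq_one_or_eq_xi k with rfl | rfl | ⟨b, rfl⟩ <;>
    constructor <;> intros <;> simp <;> ring

lemma lieCW_solitonField (κ : Fin n → ℝ) (lam : ℝ) (p : Pt n) (i j : Fin (n + 2)) :
    lieCW κ (solitonField κ lam) p i j
      = lam * gCW κ p i j + if i = 0 ∧ j = 0 then ∑ a, κ a else 0 := by
  simp only [lieCW, pd_gCW, pd_of_isLinearMap (isLinearMap_solitonField κ lam _),
    sum_fin_add_two]
  rcases eq_zero_or_eq_one_or_eq_xi i with rfl | rfl | ⟨b, rfl⟩ <;>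
    rcases eq_zero_or_eq_one_or_eq_xi j with rfl | rfl | ⟨c, rfl⟩ <;>
    simp [gCW, Pi.single_apply, Finset.sum_add_distrib]
  · have hEuler : ∑ a, lam / 2 * p.2.2 a * (2 * κ a * p.2.2 a)
        = lam * ∑ a, κ a * p.2.2 a ^ 2 := by
      rw [Finset.mul_sum]
      exact Finset.sum_congr rfl fun a _ => by ring
    rw [hEuler]
    ring
  · split_ifs <;> ring

end CahenWallach

theorem cw_soliton_general {n : ℕ} (κ : Fin n → ℝ) (lam : ℝ) :
    ∀ (p : Pt n) (i j : Fin (n + 2)),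
      lieCW κ (fun q k =>
          if (k : ℕ) = 0 then 0
          else if (k : ℕ) = 1 then (1 / 2) * (∑ a, κ a) * q.1 + lam * q.2.1
          else lam / 2 * xc q k) p i j
        + RicCW κ p i j = lam * gCW κ p i j := by
  intro p i j
  change lieCW κ (solitonField κ lam) p i j + RicCW κ p i j = lam * gCW κ p i j
  rw [lieCW_solitonField, RicCW_eq]
  split_ifs <;> ring

/-- for any `λ ∈ ℝ`, the vector field
`X = (0, (1/2)(Σᵢ κᵢ) u + λ v, (λ/2) x₁, …, (λ/2) x_n)` satisfies
`L_X g_cw + Ric = λ g_cw`; hence every Cahen-Wallach symmetric space is an expanding,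
steady and shrinking Ricci soliton. -/
theorem cw_soliton {n : ℕ} (κ : Fin n → ℝ) (hκ : ∀ i, κ i ≠ 0) (lam : ℝ) :
    ∀ (p : Pt n) (i j : Fin (n + 2)),
      lieCW κ (fun q k =>
          if (k : ℕ) = 0 then 0
          else if (k : ℕ) = 1 then (1 / 2) * (∑ a, κ a) * q.1 + lam * q.2.1
          else lam / 2 * xc q k) p i j
        + RicCW κ p i j = lam * gCW κ p i j :=
  cw_soliton_general κ lam
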